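/- The map ι : (w_0, w) ↦ ((1/4) w_0^{-1}, (1/2) w w_0^{-1}) is an involution of the subset {(w_0,w) ∈ H × H^{n-1} : tr w_0 > n(w)} of H × H^{n-1} (the Siegel domain of the quaternionic hyperbolic n-space): it maps the set to itself and ι ∘ ι = id. -/

import Mathlib

/-!
Since `w₀⁻¹ = w̄₀ / n(w₀)`, the map `ι` divides both `tr w₀` and every `n(w_p)` by the same
positive number `4 n(w₀)`, so it preserves the defining inequality `tr w₀ > n(w)`. Composing `ι`
with itself only needs `w₀ ≠ 0`, which that inequality forces through `tr w₀ > 0`.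
-/

noncomputable section

open Quaternion

variable (n : ℕ)

/-- The Siegel domain `{(w₀,w) ∈ ℍ × ℍ^{n-1} : tr w₀ > n(w)}` of the quaternionic
hyperbolic `n`-space (here `tr w₀ = 2 Re w₀` and `n(w) = Σ_p n(w_p)`). -/
def SiegelDomain : Set (Quaternion ℝ × (Fin (n - 1) → Quaternion ℝ)) :=
  {p | (∑ i, normSq (p.2 i)) < 2 * p.1.re}

/-- The map `ι : (w₀, w) ↦ ((1/4) w₀⁻¹, (1/2) w w₀⁻¹)`. -/
def siegelInv (p : Quaternion ℝ × (Fin (n - 1) → Quaternion ℝ)) :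
    Quaternion ℝ × (Fin (n - 1) → Quaternion ℝ) :=
  ((4 : ℝ)⁻¹ • p.1⁻¹, fun i => (2 : ℝ)⁻¹ • (p.2 i * p.1⁻¹))

theorem Quaternion.re_inv {R : Type*} [Field R] [LinearOrder R] [IsStrictOrderedRing R]
    (a : ℍ[R]) : a⁻¹.re = a.re / normSq a := by
  rw [inv_def, re_smul, re_star, smul_eq_mul, inv_mul_eq_div]

section

variable {n} {p : Quaternion ℝ × (Fin (n - 1) → Quaternion ℝ)}

namespace SiegelDomain

theorem re_fst_pos (hp : p ∈ SiegelDomain n) : 0 < p.1.re := by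
  have hlt : ∑ i, normSq (p.2 i) < 2 * p.1.re := hp
  have hsum : 0 ≤ ∑ i, normSq (p.2 i) := Finset.sum_nonneg fun i _ => normSq_nonneg
  linarith

theorem fst_ne_zero (hp : p ∈ SiegelDomain n) : p.1 ≠ 0 :=
  fun h => (re_fst_pos hp).ne' (by simp [h])

end SiegelDomain

theorem re_siegelInv_fst : (siegelInv n p).1.re = p.1.re / (4 * normSq p.1) := by
  rw [siegelInv, re_smul, re_inv, smul_eq_mul, div_mul_eq_div_div_swap, inv_mul_eq_div]

theorem normSq_siegelInv_snd (i : Fin (n - 1)) :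
    normSq ((siegelInv n p).2 i) = normSq (p.2 i) / (4 * normSq p.1) := by
  rw [siegelInv, normSq_smul, map_mul, normSq_inv]
  ring

theorem siegelInv_mem_siegelDomain (hp : p ∈ SiegelDomain n) :
    siegelInv n p ∈ SiegelDomain n := by
  have hlt : ∑ i, normSq (p.2 i) < 2 * p.1.re := hp
  have hnormSq : 0 < normSq p.1 :=
    normSq_nonneg.lt_of_ne' (normSq_ne_zero.2 (SiegelDomain.fst_ne_zero hp))
  show ∑ i, normSq ((siegelInv n p).2 i) < 2 * (siegelInv n p).1.re
  simp only [normSq_siegelInv_snd, re_siegelInv_fst, ← Finset.sum_div, mul_div_assoc']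
  exact div_lt_div_of_pos_right hlt (mul_pos four_pos hnormSq)

theorem siegelInv_siegelInv (h : p.1 ≠ 0) : siegelInv n (siegelInv n p) = p := by
  have hinv : ((4 : ℝ)⁻¹ • p.1⁻¹)⁻¹ = (4 : ℝ) • p.1 := by rw [smul_inv₀, inv_inv, inv_inv]
  ext1
  · simp only [siegelInv, hinv, smul_smul]
    norm_num
  · funext i
    simp only [siegelInv, hinv, smul_mul_assoc, mul_smul_comm, smul_smul, mul_assoc,
      inv_mul_cancel₀ h, mul_one]
    norm_num

end

theorem siegelInv_involution :
    Set.MapsTo (siegelInv n) (SiegelDomain n) (SiegelDomain n) ∧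
    ∀ p ∈ SiegelDomain n, siegelInv n (siegelInv n p) = p :=
  ⟨fun _ hp => siegelInv_mem_siegelDomain hp,
    fun _ hp => siegelInv_siegelInv (SiegelDomain.fst_ne_zero hp)⟩
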